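/- Let V be a 3-dimensional real vector space with basis {T,X,Y}, φ with nonzero entries φ(T,T) = φ(X,Y) = 1, A the algebraic curvature tensor generated by A(T,X,X,T) = ε ≠ 0, and A₁ the covariant-derivative-type 5-tensor generated by A₁(T,X,X,T;T) = ε₁ ≠ 0 (all other entries with Y vanish). Let A₂ be a 6-tensor, vanishing whenever Y appears in a slot, with possible nonzero entries generated by A₂(T,X,X,T;T,T) and A₂(T,X,X,T;X,X). Then Ξ_T = A₂(T,X,X,T;T,T)/A(T,X,X,T)² and Ξ_X = A₂(T,X,X,T;X,X)/A(T,X,X,T)² are invariant under all isomorphisms of (V,φ,A,A₁). -/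

import Mathlib

set_option maxHeartbeats 4000000 in
/-- the quantities Ξ_T = A₂(T,X,X,T;T,T)/A(T,X,X,T)² and
Ξ_X = A₂(T,X,X,T;X,X)/A(T,X,X,T)² are invariant under every isomorphism of
the model space (V, φ, A, A₁). -/
theorem stmt16 (V : Type*) [AddCommGroup V] [Module ℝ V]
    (b : Module.Basis (Fin 3) ℝ V)
    (T X Y : V) (hT : T = b 0) (hX : X = b 1) (hY : Y = b 2)
    (φ : V →ₗ[ℝ] V →ₗ[ℝ] ℝ)
    (hφsymm : ∀ u v, φ u v = φ v u)
    (hφTT : φ T T = 1) (hφXY : φ X Y = 1)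
    (hφTX : φ T X = 0) (hφTY : φ T Y = 0)
    (hφXX : φ X X = 0) (hφYY : φ Y Y = 0)
    (A : V →ₗ[ℝ] V →ₗ[ℝ] V →ₗ[ℝ] V →ₗ[ℝ] ℝ)
    (hA1 : ∀ x y z w, A x y z w = -A y x z w)
    (hA2 : ∀ x y z w, A x y z w = -A x y w z)
    (hA3 : ∀ x y z w, A x y z w = A z w x y)
    (hBianchi : ∀ x y z w, A x y z w + A y z x w + A z x y w = 0)
    (ε : ℝ) (hε : ε ≠ 0)
    (hATXXT : A T X X T = ε)
    (hAzero : ∀ i j k l : Fin 3,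
      ¬((i = 0 ∧ j = 1 ∧ k = 1 ∧ l = 0) ∨ (i = 1 ∧ j = 0 ∧ k = 0 ∧ l = 1) ∨
        (i = 0 ∧ j = 1 ∧ k = 0 ∧ l = 1) ∨ (i = 1 ∧ j = 0 ∧ k = 1 ∧ l = 0)) →
      A (b i) (b j) (b k) (b l) = 0)
    (A₁ : V →ₗ[ℝ] V →ₗ[ℝ] V →ₗ[ℝ] V →ₗ[ℝ] V →ₗ[ℝ] ℝ)
    (hA₁1 : ∀ x y z w v, A₁ x y z w v = -A₁ y x z w v)
    (hA₁2 : ∀ x y z w v, A₁ x y z w v = -A₁ x y w z v)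
    (hA₁3 : ∀ x y z w v, A₁ x y z w v = A₁ z w x y v)
    (hA₁Bianchi1 : ∀ x y z w v, A₁ x y z w v + A₁ y z x w v + A₁ z x y w v = 0)
    (hA₁Bianchi2 : ∀ x y z w v, A₁ x y z w v + A₁ y v z w x + A₁ v x z w y = 0)
    (ε₁ : ℝ) (hε₁ : ε₁ ≠ 0)
    (hA₁TXXTT : A₁ T X X T T = ε₁)
    (hA₁zero : ∀ i j k l m : Fin 3,
      ¬(m = 0 ∧
        ((i = 0 ∧ j = 1 ∧ k = 1 ∧ l = 0) ∨ (i = 1 ∧ j = 0 ∧ k = 0 ∧ l = 1) ∨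
         (i = 0 ∧ j = 1 ∧ k = 0 ∧ l = 1) ∨ (i = 1 ∧ j = 0 ∧ k = 1 ∧ l = 0))) →
      A₁ (b i) (b j) (b k) (b l) (b m) = 0)
    (A₂ : V →ₗ[ℝ] V →ₗ[ℝ] V →ₗ[ℝ] V →ₗ[ℝ] V →ₗ[ℝ] V →ₗ[ℝ] ℝ)
    (hA₂zero : ∀ i j k l m n : Fin 3,
      ¬(((m = 0 ∧ n = 0) ∨ (m = 1 ∧ n = 1)) ∧
        ((i = 0 ∧ j = 1 ∧ k = 1 ∧ l = 0) ∨ (i = 1 ∧ j = 0 ∧ k = 0 ∧ l = 1) ∨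
         (i = 0 ∧ j = 1 ∧ k = 0 ∧ l = 1) ∨ (i = 1 ∧ j = 0 ∧ k = 1 ∧ l = 0))) →
      A₂ (b i) (b j) (b k) (b l) (b m) (b n) = 0)
    (F : V ≃ₗ[ℝ] V)
    (hFφ : ∀ u v, φ (F u) (F v) = φ u v)
    (hFA : ∀ x y z w, A (F x) (F y) (F z) (F w) = A x y z w)
    (hFA₁ : ∀ x y z w v, A₁ (F x) (F y) (F z) (F w) (F v) = A₁ x y z w v) :
    A₂ (F T) (F X) (F X) (F T) (F T) (F T) / A (F T) (F X) (F X) (F T) ^ 2 =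
      A₂ T X X T T T / A T X X T ^ 2 ∧
    A₂ (F T) (F X) (F X) (F T) (F X) (F X) / A (F T) (F X) (F X) (F T) ^ 2 =
      A₂ T X X T X X / A T X X T ^ 2 := by
  subst hT hX hY
  -- coordinates of F on the basis
  obtain ⟨a0, a1, a2, hFT⟩ : ∃ x y z : ℝ, F (b 0) = x • b 0 + y • b 1 + z • b 2 := by
    have h := b.sum_repr (F (b 0)); rw [Fin.sum_univ_three] at h
    exact ⟨_, _, _, h.symm⟩
  obtain ⟨c0, c1, c2, hFX⟩ : ∃ x y z : ℝ, F (b 1) = x • b 0 + y • b 1 + z • b 2 := by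
    have h := b.sum_repr (F (b 1)); rw [Fin.sum_univ_three] at h
    exact ⟨_, _, _, h.symm⟩
  obtain ⟨d0, d1, d2, hFY⟩ : ∃ x y z : ℝ, F (b 2) = x • b 0 + y • b 1 + z • b 2 := by
    have h := b.sum_repr (F (b 2)); rw [Fin.sum_univ_three] at h
    exact ⟨_, _, _, h.symm⟩
  -- basis values of A
  have hv3 : A (b 0) (b 1) (b 0) (b 1) = -ε := by rw [hA2, hATXXT]
  have hv2 : A (b 1) (b 0) (b 0) (b 1) = ε := by rw [hA1, hv3, neg_neg]
  have hv4 : A (b 1) (b 0) (b 1) (b 0) = -ε := by rw [hA1, hATXXT]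
  -- basis values of A₁
  have hw3 : A₁ (b 0) (b 1) (b 0) (b 1) (b 0) = -ε₁ := by rw [hA₁2, hA₁TXXTT]
  have hw2 : A₁ (b 1) (b 0) (b 0) (b 1) (b 0) = ε₁ := by rw [hA₁1, hw3, neg_neg]
  have hw4 : A₁ (b 1) (b 0) (b 1) (b 0) (b 0) = -ε₁ := by rw [hA₁1, hA₁TXXTT]
  -- transposed values of φ
  have hφXT : φ (b 1) (b 0) = 0 := (hφsymm _ _).trans hφTX
  have hφYT : φ (b 2) (b 0) = 0 := (hφsymm _ _).trans hφTY
  have hφYX : φ (b 2) (b 1) = 1 := (hφsymm _ _).trans hφXY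
  -- equation from A-invariance on (T,X,X,T)
  have e1 := hFA (b 0) (b 1) (b 1) (b 0)
  rw [hATXXT, hFT, hFX] at e1
  simp only [map_add, map_smul, LinearMap.add_apply, LinearMap.smul_apply, smul_eq_mul] at e1
  simp [hATXXT, hv2, hv3, hv4, hAzero] at e1
  have E1 : (a0 * c1 - a1 * c0) ^ 2 = 1 := by
    apply mul_left_cancel₀ hε; rw [mul_one]; linear_combination e1
  -- equation from A₁-invariance on (T,X,X,T;T)
  have e2 := hFA₁ (b 0) (b 1) (b 1) (b 0) (b 0)
  rw [hA₁TXXTT, hFT, hFX] at e2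
  simp only [map_add, map_smul, LinearMap.add_apply, LinearMap.smul_apply, smul_eq_mul] at e2
  simp [hA₁TXXTT, hw2, hw3, hw4, hA₁zero] at e2
  have E2 : a0 * ((a0 * c1 - a1 * c0) ^ 2) = 1 := by
    apply mul_left_cancel₀ hε₁; rw [mul_one]; linear_combination e2
  -- equation from A₁-invariance on (T,X,X,T;X)
  have e3 := hFA₁ (b 0) (b 1) (b 1) (b 0) (b 1)
  rw [hA₁zero 0 1 1 0 1 (by decide), hFT, hFX] at e3
  simp only [map_add, map_smul, LinearMap.add_apply, LinearMap.smul_apply, smul_eq_mul] at e3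
  simp [hA₁TXXTT, hw2, hw3, hw4, hA₁zero, -mul_eq_zero] at e3
  have E3 : c0 * ((a0 * c1 - a1 * c0) ^ 2) = 0 := by
    apply mul_left_cancel₀ hε₁; rw [mul_zero]; linear_combination e3
  rw [E1, mul_one] at E2
  rw [E1, mul_one] at E3
  have ha0 : a0 = 1 := E2
  have hc0 : c0 = 0 := E3
  rw [ha0, hc0] at E1
  have hc1 : c1 ^ 2 = 1 := by linear_combination E1
  have hc1ne : c1 ≠ 0 := by intro hh; rw [hh] at hc1; norm_num at hc1
  -- φ(X,X)
  have e4 := hFφ (b 1) (b 1)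
  rw [hφXX, hFX] at e4
  simp only [map_add, map_smul, LinearMap.add_apply, LinearMap.smul_apply, smul_eq_mul,
    hφTT, hφTX, hφTY, hφXX, hφXY, hφYY, hφXT, hφYT, hφYX,
    mul_zero, mul_one, zero_add, add_zero] at e4
  have E4 : c0 * c0 + c1 * c2 + c2 * c1 = 0 := by linear_combination e4
  have hc2 : c2 = 0 := by
    have h : c1 * c2 = 0 := by linear_combination E4 / 2 - (c0 / 2) * hc0
    exact (mul_eq_zero.mp h).resolve_left hc1ne
  -- φ(T,X)
  have e5 := hFφ (b 0) (b 1)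
  rw [hφTX, hFT, hFX] at e5
  simp only [map_add, map_smul, LinearMap.add_apply, LinearMap.smul_apply, smul_eq_mul,
    hφTT, hφTX, hφTY, hφXX, hφXY, hφYY, hφXT, hφYT, hφYX,
    mul_zero, mul_one, zero_add, add_zero] at e5
  have E5 : a0 * c0 + a1 * c2 + a2 * c1 = 0 := by linear_combination e5
  have ha2 : a2 = 0 := by
    have h : a2 * c1 = 0 := by linear_combination E5 - a0 * hc0 - a1 * hc2
    exact (mul_eq_zero.mp h).resolve_right hc1ne
  -- A(T,X,X,Y) = 0
  have e6 := hFA (b 0) (b 1) (b 1) (b 2)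
  rw [hAzero 0 1 1 2 (by decide), hFT, hFX, hFY] at e6
  simp only [map_add, map_smul, LinearMap.add_apply, LinearMap.smul_apply, smul_eq_mul] at e6
  simp [hATXXT, hv2, hv3, hv4, hAzero, -mul_eq_zero] at e6
  have E6 : (a0 * c1 - a1 * c0) * (c1 * d0 - c0 * d1) = 0 := by
    apply mul_left_cancel₀ hε; rw [mul_zero]; linear_combination e6
  rw [ha0, hc0] at E6
  have hd0 : d0 = 0 := by
    have h : c1 ^ 2 * d0 = 0 := by linear_combination E6
    linear_combination h - d0 * hc1
  -- φ(T,Y) and φ(X,Y)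
  have e7 := hFφ (b 0) (b 2)
  rw [hφTY, hFT, hFY] at e7
  simp only [map_add, map_smul, LinearMap.add_apply, LinearMap.smul_apply, smul_eq_mul,
    hφTT, hφTX, hφTY, hφXX, hφXY, hφYY, hφXT, hφYT, hφYX,
    mul_zero, mul_one, zero_add, add_zero] at e7
  have E7 : a0 * d0 + a1 * d2 + a2 * d1 = 0 := by linear_combination e7
  have e8 := hFφ (b 1) (b 2)
  rw [hφXY, hFX, hFY] at e8
  simp only [map_add, map_smul, LinearMap.add_apply, LinearMap.smul_apply, smul_eq_mul,
    hφTT, hφTX, hφTY, hφXX, hφXY, hφYY, hφXT, hφYT, hφYX,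
    mul_zero, mul_one, zero_add, add_zero] at e8
  have E8 : c0 * d0 + c1 * d2 + c2 * d1 = 1 := by linear_combination e8
  have hd2 : c1 * d2 = 1 := by linear_combination E8 - d0 * hc0 - d1 * hc2
  have ha1 : a1 = 0 := by
    have h : a1 * d2 = 0 := by linear_combination E7 - a0 * hd0 - d1 * ha2
    linear_combination c1 * h - a1 * hd2
  -- so F T = T and F X = c1 • X
  rw [ha0, ha1, ha2] at hFT
  simp only [one_smul, zero_smul, add_zero] at hFT
  rw [hc0, hc2] at hFX
  simp only [zero_smul, add_zero, zero_add] at hFX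
  constructor
  · rw [hFA, hFT, hFX]
    simp only [map_smul, LinearMap.smul_apply, smul_eq_mul]
    congr 1
    linear_combination (A₂ (b 0) (b 1) (b 1) (b 0) (b 0) (b 0)) * hc1
  · rw [hFA, hFT, hFX]
    simp only [map_smul, LinearMap.smul_apply, smul_eq_mul]
    congr 1
    linear_combination ((A₂ (b 0) (b 1) (b 1) (b 0) (b 1) (b 1)) * (c1 ^ 2 + 1)) * hc1
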